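/- arXiv:1909.13731 — 6 statements merged into one kernel-verified Lean document; each statement's English description precedes it below -/
import Mathlib

section
/- Mass Transport Principle on ℝ^d: Let d ≥ 1 and let π be a (nonnegative, possibly infinite) Borel measure on ℝ^d × ℝ^d that is diagonally invariant. Then for every measurable set A ⊆ ℝ^d with nonempty interior, π(A × ℝ^d) = π(ℝ^d × A), where the equality is between values in [0, ∞]. -/
/-!
The lattice `ℤ^d` tiles `ℝ^d` by translates `Q + z` of the unit cell `Q`. Cutting `Q × ℝ^d` into
the pieces `Q × (Q + z)` and translating each diagonally by `-z` turns them into the pieces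
`(Q - z) × Q` of `ℝ^d × Q`, so the two marginals of `π` agree on `Q`. Both marginals are
translation invariant, hence each is either a multiple of Lebesgue measure or gives infinite mass
to every set with nonempty interior; agreeing on `Q`, they agree on every set with nonempty
interior.
-/

open MeasureTheory Set Function
open scoped Pointwise ENNReal

section Tiling

variable {G X : Type*} [AddGroup G] [AddAction G X] {s : Set X}

theorem pairwise_disjoint_vadd_set_of_existsUnique (hs : ∀ x : X, ∃! g : G, g +ᵥ x ∈ s) :
    Pairwise (Disjoint on fun g : G => g +ᵥ s) := by
  intro g h hgh
  refine Set.disjoint_left.2 fun x hxg hxh => hgh ?_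
  rw [mem_vadd_set_iff_neg_vadd_mem] at hxg hxh
  exact neg_injective ((hs x).unique hxg hxh)

theorem iUnion_vadd_set_of_existsUnique (hs : ∀ x : X, ∃! g : G, g +ᵥ x ∈ s) :
    ⋃ g : G, g +ᵥ s = univ :=
  eq_univ_of_forall fun x =>
    let ⟨g, hg, _⟩ := hs x
    mem_iUnion.2 ⟨-g, mem_vadd_set_iff_neg_vadd_mem.2 (by rwa [neg_neg])⟩

end Tiling

namespace MeasureTheory.Measure

section DiagonalAction

variable {G X : Type*} [AddGroup G] [AddAction G X] [MeasurableSpace X]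

def IsDiagonallyInvariant (G : Type*) [AddGroup G] [AddAction G X] (π : Measure (X × X)) :
    Prop :=
  ∀ (g : G) (A B : Set X), MeasurableSet A → MeasurableSet B →
    π ((g +ᵥ A) ×ˢ (g +ᵥ B)) = π (A ×ˢ B)

variable {π : Measure (X × X)} {s : Set X}

theorem IsDiagonallyInvariant.measure_prod_univ_eq_univ_prod [Countable G]
    [MeasurableConstVAdd G X] (hπ : IsDiagonallyInvariant G π) (hs : MeasurableSet s)
    (hfd : ∀ x : X, ∃! g : G, g +ᵥ x ∈ s) : π (s ×ˢ univ) = π (univ ×ˢ s) := by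
  have htiles := iUnion_vadd_set_of_existsUnique hfd
  have hdisj := pairwise_disjoint_vadd_set_of_existsUnique hfd
  have hmove (g : G) : π (s ×ˢ (g +ᵥ s)) = π ((-g +ᵥ s) ×ˢ s) := by
    rw [← hπ (-g) s (g +ᵥ s) hs (hs.const_vadd g), neg_vadd_vadd]
  calc π (s ×ˢ univ) = π (⋃ g : G, s ×ˢ (g +ᵥ s)) := by rw [← prod_iUnion, htiles]
    _ = ∑' g : G, π (s ×ˢ (g +ᵥ s)) :=
      measure_iUnion (fun g h hgh => (hdisj hgh).set_prod_right s s)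
        fun g => hs.prod (hs.const_vadd g)
    _ = ∑' g : G, π ((-g +ᵥ s) ×ˢ s) := tsum_congr hmove
    _ = ∑' g : G, π ((g +ᵥ s) ×ˢ s) := (Equiv.neg G).tsum_eq fun g => π ((g +ᵥ s) ×ˢ s)
    _ = π (⋃ g : G, (g +ᵥ s) ×ˢ s) :=
      (measure_iUnion (fun g h hgh => (hdisj hgh).set_prod_left s s)
        fun g => (hs.const_vadd g).prod hs).symm
    _ = π (univ ×ˢ s) := by rw [← iUnion_prod_const, htiles]

end DiagonalAction

section Marginals

variable {G : Type*} [AddGroup G] [MeasurableSpace G] [MeasurableAdd G] {π : Measure (G × G)}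

theorem IsDiagonallyInvariant.isAddLeftInvariant_map_fst (hπ : IsDiagonallyInvariant G π) :
    (π.map Prod.fst).IsAddLeftInvariant := by
  refine ⟨fun g => ext fun A hA => ?_⟩
  rw [map_apply (measurable_const_add g) hA, map_apply measurable_fst (measurable_const_add g hA),
    map_apply measurable_fst hA, ← prod_univ, ← prod_univ,
    ← hπ (-g) A univ hA MeasurableSet.univ, vadd_set_univ]
  exact congrArg (fun t => π (t ×ˢ univ)) (preimage_vadd g A)

theorem IsDiagonallyInvariant.isAddLeftInvariant_map_snd (hπ : IsDiagonallyInvariant G π) :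
    (π.map Prod.snd).IsAddLeftInvariant := by
  refine ⟨fun g => ext fun A hA => ?_⟩
  rw [map_apply (measurable_const_add g) hA, map_apply measurable_snd (measurable_const_add g hA),
    map_apply measurable_snd hA, ← univ_prod, ← univ_prod,
    ← hπ (-g) univ A MeasurableSet.univ hA, vadd_set_univ]
  exact congrArg (fun t => π (univ ×ˢ t)) (preimage_vadd g A)

end Marginals

section Uniqueness

variable {G : Type*} [AddGroup G] [TopologicalSpace G] [IsTopologicalAddGroup G]
  [MeasurableSpace G] [BorelSpace G]
  {μ ν : Measure G} [μ.IsAddLeftInvariant] [ν.IsAddLeftInvariant] {s : Set G}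

theorem measure_eq_top_of_isAddLeftInvariant (hs : IsCompact (closure s)) (hμs : μ s = ∞)
    {A : Set G} (hA : (interior A).Nonempty) : μ A = ∞ := by
  by_contra hμA
  exact (measure_mono subset_closure |>.trans_lt
    (measure_lt_top_of_isCompact_of_isAddLeftInvariant' hA hμA hs)).ne hμs

theorem eq_of_isAddLeftInvariant_of_measure_eq [LocallyCompactSpace G]
    [SecondCountableTopology G] (hs : IsCompact (closure s)) (hs' : (interior s).Nonempty)
    (hμs : μ s ≠ ∞) (hμν : μ s = ν s) : μ = ν := by
  have : IsFiniteMeasureOnCompacts μ :=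
    ⟨fun K hK => measure_lt_top_of_isCompact_of_isAddLeftInvariant' hs' hμs hK⟩
  have : IsFiniteMeasureOnCompacts ν :=
    ⟨fun K hK => measure_lt_top_of_isCompact_of_isAddLeftInvariant' hs' (hμν ▸ hμs) hK⟩
  have hpos : addHaar s ≠ 0 := (addHaar.measure_pos_of_nonempty_interior hs').ne'
  have hfin : addHaar s ≠ ∞ := (measure_mono subset_closure |>.trans_lt hs.measure_lt_top).ne
  rw [isAddLeftInvariant_eq_smul μ addHaar, isAddLeftInvariant_eq_smul ν addHaar] at hμν ⊢
  simp only [smul_apply, ENNReal.smul_def, smul_eq_mul, ENNReal.mul_left_inj hpos hfin,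
    ENNReal.coe_inj] at hμν
  rw [hμν]

theorem measure_eq_of_isAddLeftInvariant_of_measure_eq [LocallyCompactSpace G]
    [SecondCountableTopology G] (hs : IsCompact (closure s)) (hs' : (interior s).Nonempty)
    (hμν : μ s = ν s) {A : Set G} (hA : (interior A).Nonempty) : μ A = ν A := by
  by_cases hμs : μ s = ∞
  · rw [measure_eq_top_of_isAddLeftInvariant hs hμs hA,
      measure_eq_top_of_isAddLeftInvariant hs (hμν ▸ hμs) hA]
  · rw [eq_of_isAddLeftInvariant_of_measure_eq hs hs' hμs hμν]

end Uniqueness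

end MeasureTheory.Measure

theorem ZSpan.interior_fundamentalDomain_nonempty {E ι : Type*} [NormedAddCommGroup E]
    [NormedSpace ℝ E] [Finite ι] (b : Module.Basis ι ℝ E) :
    (interior (fundamentalDomain b)).Nonempty := by
  have : FiniteDimensional ℝ E := b.finiteDimensional_of_finite
  let U : Set E := b.equivFun ⁻¹' univ.pi fun _ => Ioo 0 1
  have hU : IsOpen U := (isOpen_set_pi finite_univ fun _ _ => isOpen_Ioo).preimage
    (LinearMap.continuous_of_finiteDimensional _)
  have hUsub : U ⊆ fundamentalDomain b := fun x hx i => Ioo_subset_Ico_self (hx i trivial)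
  exact ⟨b.equivFun.symm fun _ => 1 / 2, interior_maximal hUsub hU fun i _ => by norm_num⟩

theorem mass_transport_principle_general
    (d : ℕ)
    (π : Measure (EuclideanSpace ℝ (Fin d) × EuclideanSpace ℝ (Fin d)))
    (hdiag : ∀ (x : EuclideanSpace ℝ (Fin d)) (A B : Set (EuclideanSpace ℝ (Fin d))),
      MeasurableSet A → MeasurableSet B →
      π (A ×ˢ B) = π (((fun a => a + x) '' A) ×ˢ ((fun b => b + x) '' B)))
    (A : Set (EuclideanSpace ℝ (Fin d))) (hA : MeasurableSet A)
    (hAint : (interior A).Nonempty) :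
    π (A ×ˢ (univ : Set (EuclideanSpace ℝ (Fin d)))) =
      π ((univ : Set (EuclideanSpace ℝ (Fin d))) ×ˢ A) := by
  have hπ : π.IsDiagonallyInvariant (EuclideanSpace ℝ (Fin d)) := fun x A B hA hB => by
    have h := (hdiag x A B hA hB).symm
    simp only [add_comm _ x] at h
    exact h
  have := hπ.isAddLeftInvariant_map_fst
  have := hπ.isAddLeftInvariant_map_snd
  let b := (EuclideanSpace.basisFun (Fin d) ℝ).toBasis
  have hQ := ZSpan.fundamentalDomain_measurableSet b
  have hcell : π (ZSpan.fundamentalDomain b ×ˢ univ) = π (univ ×ˢ ZSpan.fundamentalDomain b) :=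
    Measure.IsDiagonallyInvariant.measure_prod_univ_eq_univ_prod
      (G := Submodule.span ℤ (range b)) (fun g => hπ g) hQ
      (ZSpan.exist_unique_vadd_mem_fundamentalDomain b)
  rw [prod_univ, univ_prod, ← Measure.map_apply measurable_fst hQ,
    ← Measure.map_apply measurable_snd hQ] at hcell
  rw [prod_univ, univ_prod, ← Measure.map_apply measurable_fst hA,
    ← Measure.map_apply measurable_snd hA]
  exact Measure.measure_eq_of_isAddLeftInvariant_of_measure_eq
    (ZSpan.fundamentalDomain_isBounded b).isCompact_closure
    (ZSpan.interior_fundamentalDomain_nonempty b) hcell hAint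

/-- **Mass Transport Principle on ℝ^d.**  If `π` is a diagonally invariant Borel measure on
`ℝ^d × ℝ^d` (i.e. `π (A ×ˢ B) = π ((A + x) ×ˢ (B + x))` for every `x` and all measurable
`A`, `B`), then for every measurable set `A` with nonempty interior the outgoing mass equals
the incoming mass: `π (A ×ˢ univ) = π (univ ×ˢ A)`. -/
theorem mass_transport_principle
    (d : ℕ) (hd : 1 ≤ d)
    (π : Measure (EuclideanSpace ℝ (Fin d) × EuclideanSpace ℝ (Fin d)))
    (hdiag : ∀ (x : EuclideanSpace ℝ (Fin d)) (A B : Set (EuclideanSpace ℝ (Fin d))),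
      MeasurableSet A → MeasurableSet B →
      π (A ×ˢ B) = π (((fun a => a + x) '' A) ×ˢ ((fun b => b + x) '' B)))
    (A : Set (EuclideanSpace ℝ (Fin d))) (hA : MeasurableSet A)
    (hAint : (interior A).Nonempty) :
    π (A ×ˢ (univ : Set (EuclideanSpace ℝ (Fin d)))) =
      π ((univ : Set (EuclideanSpace ℝ (Fin d))) ×ˢ A) :=
  mass_transport_principle_general d π hdiag A hA hAint
end

section
/- Let d ≥ 1 and p ≥ 1, and let Λ ⊆ ℝ^d be a measurable set. Then ∫_Λ ‖x‖^p dx ≥ (d/(p + d)) · ϑ(d)^{−p/d} · Leb(Λ)^{1 + p/d}, where ‖·‖ is the Euclidean norm, Leb is d-dimensional Lebesgue measure, ϑ(d) = Leb(B(0,1)) is the volume of the Euclidean unit ball in ℝ^d, and the inequality is understood in [0, ∞]. Equivalently, Leb(Λ)^{1+p/d} ≤ (1 + p/d) · ϑ(d)^{p/d} · ∫_Λ ‖x‖^p dx. -/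
/-!
Bathtub argument. Choose `r` with `vol (B(0, r)) = vol Λ`. Then `B(0, r) \ Λ` and `Λ \ B(0, r)`
have equal measure, and `‖x‖ ^ p` is at most `r ^ p` on the first and at least `r ^ p` on the
second, so `∫_Λ ‖x‖ ^ p ≥ ∫_{B(0, r)} ‖x‖ ^ p`. In polar coordinates the latter equals
`d ϑ(d) r ^ (d + p) / (d + p)`, which is the bound once `r` is eliminated via
`vol (B(0, r)) = ϑ(d) r ^ d`. If `vol Λ = ∞`, then `Λ` minus the unit ball has infinite measure
and the integrand is at least `1` there.
-/

open MeasureTheory Set Metric Module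
open scoped ENNReal

theorem setLIntegral_le_setLIntegral_of_measure_eq {α : Type*} [MeasurableSpace α]
    {μ : Measure α} {s t : Set α} {f : α → ℝ≥0∞} (c : ℝ≥0∞) (hs : MeasurableSet s)
    (ht : MeasurableSet t) (hst : μ s = μ t) (hs_fin : μ s ≠ ∞)
    (hf_s : ∀ x ∈ s \ t, f x ≤ c) (hf_t : ∀ x ∈ t \ s, c ≤ f x) :
    ∫⁻ x in s, f x ∂μ ≤ ∫⁻ x in t, f x ∂μ := by
  have h_sdiff : μ (s \ t) = μ (t \ s) :=
    measure_sdiff_symm hs.nullMeasurableSet ht.nullMeasurableSet hst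
      (ne_top_of_le_ne_top hs_fin (measure_mono inter_subset_left))
  have h_outside : ∫⁻ x in s \ t, f x ∂μ ≤ ∫⁻ x in t \ s, f x ∂μ :=
    calc ∫⁻ x in s \ t, f x ∂μ ≤ ∫⁻ _ in s \ t, c ∂μ := setLIntegral_mono' (hs.diff ht) hf_s
      _ = ∫⁻ _ in t \ s, c ∂μ := by rw [setLIntegral_const, setLIntegral_const, h_sdiff]
      _ ≤ ∫⁻ x in t \ s, f x ∂μ := setLIntegral_mono' (ht.diff hs) hf_t
  rw [← lintegral_inter_add_sdiff f s ht, ← lintegral_inter_add_sdiff f t hs, inter_comm]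
  gcongr

theorem setLIntegral_norm_rpow_eq_top_of_measure_eq_top {E : Type*} [NormedAddCommGroup E]
    [MeasurableSpace E] [BorelSpace E] [ProperSpace E] {μ : Measure E}
    [IsFiniteMeasureOnCompacts μ] {p : ℝ} (hp : 0 ≤ p) {s : Set E}
    (hs : MeasurableSet s) (hs_top : μ s = ∞) :
    ∫⁻ x in s, ENNReal.ofReal (‖x‖ ^ p) ∂μ = ∞ := by
  have h_far : μ (s \ ball 0 1) = ∞ := by
    refine eq_top_iff.mpr (le_trans ?_ le_measure_sdiff)
    rw [hs_top, ENNReal.top_sub measure_ball_lt_top.ne]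
  refine eq_top_iff.mpr ?_
  calc ∞ = ∫⁻ _ in s \ ball 0 1, 1 ∂μ := by rw [setLIntegral_const, h_far, one_mul]
    _ ≤ ∫⁻ x in s \ ball 0 1, ENNReal.ofReal (‖x‖ ^ p) ∂μ := by
      refine setLIntegral_mono' (hs.diff measurableSet_ball) fun x hx => ?_
      have h_one : 1 ≤ ‖x‖ := by simpa using hx.2
      exact ENNReal.one_le_ofReal.mpr (Real.one_le_rpow h_one hp)
    _ ≤ ∫⁻ x in s, ENNReal.ofReal (‖x‖ ^ p) ∂μ := lintegral_mono_set sdiff_subset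

section HaarBall

variable {E : Type*} [NormedAddCommGroup E] [NormedSpace ℝ E] [FiniteDimensional ℝ E]
  [MeasurableSpace E] [BorelSpace E] [Nontrivial E] (μ : Measure E) [μ.IsAddHaarMeasure]

theorem exists_measure_ball_eq {a : ℝ≥0∞} (ha : a ≠ ∞) :
    ∃ r, 0 ≤ r ∧ μ (ball (0 : E) r) = a := by
  set ϑ := μ (ball (0 : E) 1)
  have hϑ : ϑ ≠ 0 := (measure_ball_pos μ 0 one_pos).ne'
  have hϑ_top : ϑ ≠ ∞ := measure_ball_lt_top.ne
  have h_ratio : 0 ≤ a.toReal / ϑ.toReal := by positivity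
  refine ⟨(a.toReal / ϑ.toReal) ^ (finrank ℝ E : ℝ)⁻¹, by positivity, ?_⟩
  rw [Measure.addHaar_ball _ _ (by positivity),
    Real.rpow_inv_natCast_pow h_ratio finrank_pos.ne',
    ENNReal.ofReal_div_of_pos (ENNReal.toReal_pos hϑ hϑ_top), ENNReal.ofReal_toReal ha,
    ENNReal.ofReal_toReal hϑ_top, ENNReal.div_mul_cancel hϑ hϑ_top]

theorem setIntegral_norm_rpow_ball {p r : ℝ} (hp : -(finrank ℝ E : ℝ) < p) (hr : 0 ≤ r) :
    ∫ x in ball (0 : E) r, ‖x‖ ^ p ∂μ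
      = finrank ℝ E * μ.real (ball 0 1) * (r ^ (finrank ℝ E + p) / (finrank ℝ E + p)) := by
  have h_ind : ∫ x in ball (0 : E) r, ‖x‖ ^ p ∂μ
      = ∫ x, (Iio r).indicator (· ^ p) ‖x‖ ∂μ := by
    rw [← integral_indicator measurableSet_ball]
    congr 1 with x
    simp [indicator]
  have h_radial : ∫ y in Ioi (0 : ℝ), y ^ (finrank ℝ E - 1) • (Iio r).indicator (· ^ p) y
      = ∫ y in (0)..r, y ^ ((finrank ℝ E : ℝ) - 1 + p) := by
    rw [intervalIntegral.integral_of_le hr, ← Measure.restrict_congr_set Ioo_ae_eq_Ioc,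
      ← Ioi_inter_Iio, ← setIntegral_indicator measurableSet_Iio]
    refine setIntegral_congr_fun measurableSet_Ioi fun y (hy : 0 < y) => ?_
    by_cases hyr : y ∈ Iio r
    · rw [indicator_of_mem hyr, indicator_of_mem hyr, smul_eq_mul, ← Real.rpow_natCast,
        ← Real.rpow_add hy, Nat.cast_sub finrank_pos, Nat.cast_one]
    · simp [hyr]
  rw [h_ind, integral_fun_norm_addHaar, h_radial, integral_rpow (Or.inl (by linarith)),
    Real.zero_rpow (by linarith), nsmul_eq_mul, smul_eq_mul]
  ring_nf

theorem setLIntegral_norm_rpow_ball {p r : ℝ} (hp : -(finrank ℝ E : ℝ) < p) (hr : 0 ≤ r) :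
    ∫⁻ x in ball (0 : E) r, ENNReal.ofReal (‖x‖ ^ p) ∂μ
      = ENNReal.ofReal (finrank ℝ E / (p + finrank ℝ E) * r ^ (finrank ℝ E + p))
          * μ (ball 0 1) := by
  have h_int : IntegrableOn (fun x : E => ‖x‖ ^ p) (ball 0 r) μ :=
    integrableOn_ball_of_norm_le_rpow finrank_pos (C := 1) (α := -p) (by linarith)
      (ae_of_all _ fun x => by simp [abs_of_nonneg (Real.rpow_nonneg (norm_nonneg x) p)])
      (measurable_norm.pow_const p).aestronglyMeasurable
  have h_real : finrank ℝ E * μ.real (ball 0 1) * (r ^ (finrank ℝ E + p) / (finrank ℝ E + p))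
      = finrank ℝ E / (p + finrank ℝ E) * r ^ (finrank ℝ E + p) * μ.real (ball 0 1) := by
    ring
  rw [← ofReal_integral_eq_lintegral_ofReal h_int (ae_of_all _ fun x => by positivity),
    setIntegral_norm_rpow_ball μ hp hr, h_real, ENNReal.ofReal_mul' measureReal_nonneg,
    Measure.real, ENNReal.ofReal_toReal measure_ball_lt_top.ne]

theorem setLIntegral_norm_rpow_ball_eq_measure_rpow {p r : ℝ} (hp : -(finrank ℝ E : ℝ) < p)
    (hr : 0 ≤ r) :
    ∫⁻ x in ball (0 : E) r, ENNReal.ofReal (‖x‖ ^ p) ∂μ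
      = ENNReal.ofReal (finrank ℝ E / (p + finrank ℝ E)) * μ (ball 0 1) ^ (-(p / finrank ℝ E))
          * μ (ball 0 r) ^ (1 + p / finrank ℝ E) := by
  have hn : (0 : ℝ) < finrank ℝ E := mod_cast finrank_pos
  have h_exp : 0 ≤ 1 + p / finrank ℝ E := by
    rw [← div_self hn.ne', ← add_div]; exact div_nonneg (by linarith) hn.le
  have h_unit : μ (ball (0 : E) 1) ^ (-(p / finrank ℝ E)) * μ (ball 0 1) ^ (1 + p / finrank ℝ E)
      = μ (ball 0 1) := by
    rw [← ENNReal.rpow_add _ _ (measure_ball_pos μ 0 one_pos).ne' measure_ball_lt_top.ne,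
      show -(p / finrank ℝ E) + (1 + p / finrank ℝ E) = 1 by ring, ENNReal.rpow_one]
  have h_radius : ENNReal.ofReal (r ^ finrank ℝ E) ^ (1 + p / finrank ℝ E)
      = ENNReal.ofReal (r ^ (finrank ℝ E + p)) := by
    rw [ENNReal.ofReal_rpow_of_nonneg (by positivity) h_exp, ← Real.rpow_natCast,
      ← Real.rpow_mul hr, mul_add, mul_one, mul_div_cancel₀ _ hn.ne']
  rw [setLIntegral_norm_rpow_ball μ hp hr, Measure.addHaar_ball μ 0 hr,
    ENNReal.mul_rpow_of_nonneg _ _ h_exp, h_radius,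
    ENNReal.ofReal_mul (div_nonneg hn.le (by linarith))]
  conv_lhs => rw [← h_unit]
  ring

end HaarBall

/-- Among all measurable sets `Λ ⊆ ℝ^d`, the centered ball minimizes `∫_Λ ‖x‖^p dx`:
`∫_Λ ‖x‖^p dx ≥ (d/(p+d)) · ϑ(d)^(−p/d) · Leb(Λ)^(1+p/d)`, where `ϑ(d)` is the volume of
the Euclidean unit ball. The inequality is understood in `[0, ∞]`. -/
theorem lintegral_norm_rpow_ge_of_measure
    (d : ℕ) (hd : 1 ≤ d) (p : ℝ) (hp : 1 ≤ p)
    (Λ : Set (EuclideanSpace ℝ (Fin d))) (hΛ : MeasurableSet Λ) :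
    ENNReal.ofReal ((d : ℝ) / (p + d)) *
        (volume (Metric.ball (0 : EuclideanSpace ℝ (Fin d)) 1)) ^ (-(p / d)) *
        (volume Λ) ^ (1 + p / d)
      ≤ ∫⁻ x in Λ, ENNReal.ofReal (‖x‖ ^ p) := by
  have : Nonempty (Fin d) := ⟨⟨0, hd⟩⟩
  have hp₀ : 0 ≤ p := by linarith
  rcases eq_or_ne (volume Λ) ∞ with hΛ_top | hΛ_fin
  · rw [setLIntegral_norm_rpow_eq_top_of_measure_eq_top hp₀ hΛ hΛ_top]
    exact le_top
  let μ : Measure (EuclideanSpace ℝ (Fin d)) := volume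
  obtain ⟨r, hr, h_ball⟩ := exists_measure_ball_eq μ hΛ_fin
  have h_ball_integral := setLIntegral_norm_rpow_ball_eq_measure_rpow μ (p := p)
    (by rw [finrank_euclideanSpace_fin]; linarith) hr
  rw [finrank_euclideanSpace_fin, h_ball] at h_ball_integral
  rw [← h_ball_integral]
  refine setLIntegral_le_setLIntegral_of_measure_eq (ENNReal.ofReal (r ^ p)) measurableSet_ball hΛ
    h_ball (h_ball ▸ hΛ_fin) (fun x hx => ?_) (fun x hx => ?_)
  · exact ENNReal.ofReal_le_ofReal
      (Real.rpow_le_rpow (norm_nonneg x) (mem_ball_zero_iff.mp hx.1).le hp₀)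
  · exact ENNReal.ofReal_le_ofReal (Real.rpow_le_rpow hr (by simpa using hx.2) hp₀)
end

section
/- Let z₁, z₂, z₃ ∈ ℍ be such that z₂, viewed as a complex number, lies on the Euclidean segment joining z₁ and z₃ (i.e. z₂ ∈ [z₁, z₃] in ℂ). Then the hyperbolic distances satisfy dist(z₁, z₂) ≤ dist(z₁, z₃). -/
/-!
Write `z₂ = (1 - t) z₁ + t z₃` with `t ∈ [0, 1]`. Then `|z₁ - z₂| = t |z₁ - z₃|` while
`Im z₂ ≥ t² Im z₃`, so `|z₁ - z₂|² / (Im z₁ Im z₂) ≤ |z₁ - z₃|² / (Im z₁ Im z₃)`; and the hyperbolic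
distance is an increasing function of this ratio, as `cosh d(z, w) = 1 + |z - w|² / (2 Im z Im w)`.
-/

open scoped UpperHalfPlane

theorem Complex.im_lineMap (z w : ℂ) (t : ℝ) :
    (AffineMap.lineMap z w t).im = (1 - t) * z.im + t * w.im := by
  simp [AffineMap.lineMap_apply_module]

theorem UpperHalfPlane.dist_le_dist_of_sq_div_le {z w z' w' : ℍ}
    (h : dist (z : ℂ) w ^ 2 / (z.im * w.im) ≤ dist (z' : ℂ) w' ^ 2 / (z'.im * w'.im)) :
    dist z w ≤ dist z' w' := by
  have hcosh (a b : ℍ) : Real.cosh (dist a b) = 1 + dist (a : ℂ) b ^ 2 / (a.im * b.im) / 2 := by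
    rw [cosh_dist]; ring
  rw [← abs_of_nonneg dist_nonneg, ← abs_of_nonneg (dist_nonneg (x := z')), ← Real.cosh_le_cosh,
    hcosh, hcosh]
  gcongr

/-- If `z₂`, viewed as a complex number, lies on the Euclidean segment joining `z₁` and `z₃`,
then the hyperbolic distances satisfy `dist z₁ z₂ ≤ dist z₁ z₃`. -/
theorem UpperHalfPlane.dist_le_of_mem_segment (z₁ z₂ z₃ : ℍ)
    (h : (z₂ : ℂ) ∈ segment ℝ (z₁ : ℂ) (z₃ : ℂ)) :
    dist z₁ z₂ ≤ dist z₁ z₃ := by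
  rw [segment_eq_image_lineMap] at h
  obtain ⟨t, ⟨ht₀, ht₁⟩, hz₂⟩ := h
  have hdist : dist (z₁ : ℂ) z₂ = t * dist (z₁ : ℂ) z₃ := by
    rw [← hz₂, dist_left_lineMap, Real.norm_of_nonneg ht₀]
  have him : t ^ 2 * z₃.im ≤ z₂.im := by
    rw [← coe_im z₂, ← hz₂, Complex.im_lineMap, coe_im, coe_im]
    linarith [mul_nonneg (sub_nonneg.2 ht₁) z₁.im_pos.le,
      mul_nonneg (mul_nonneg ht₀ (sub_nonneg.2 ht₁)) z₃.im_pos.le]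
  apply dist_le_dist_of_sq_div_le
  rw [hdist, div_le_div_iff₀ (by positivity) (by positivity)]
  calc (t * dist (z₁ : ℂ) z₃) ^ 2 * (z₁.im * z₃.im)
      = dist (z₁ : ℂ) z₃ ^ 2 * (z₁.im * (t ^ 2 * z₃.im)) := by ring
    _ ≤ dist (z₁ : ℂ) z₃ ^ 2 * (z₁.im * z₂.im) := by gcongr
end

section
/- Horodistance function of the point at infinity in the half-plane model: Let z = x + i y ∈ ℍ. Then dist(z, z′) − dist(i, z′) converges to −log y as z′ → ∞ in ℍ, where the limit is taken along the filter of points z′ ∈ ℍ whose complex modulus |z′| tends to +∞. (In other words, the horodistance function of the point at infinity ∞, with base point i, is H_∞(x + i y) = −log y.) -/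
/-!
Since `dist z w = 2 arsinh (|z - w| / (2 √(Im z · Im w)))` and `arsinh x = log (2x) + o(1)` as
`x → ∞`, one has `dist z w = 2 log |w| - log (Im w) - log (Im z) + o(1)` as `|w| → ∞`. The terms
depending only on `w` cancel in `dist z w - dist i w`, leaving `-log (Im z) + log (Im i)`.
-/

open Filter Bornology Real
open scoped UpperHalfPlane Topology

theorem Real.tendsto_arsinh_sub_log_atTop :
    Tendsto (fun x => arsinh x - log x) atTop (𝓝 (log 2)) := by
  have hlim : Tendsto (fun x : ℝ => 1 + √((x ^ 2)⁻¹ + 1)) atTop (𝓝 2) := by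
    have := (((tendsto_inv_atTop_zero (𝕜 := ℝ)).pow 2).add_const 1).sqrt.const_add 1
    norm_num at this
    exact this
  refine (hlim.log two_ne_zero).congr' ?_
  filter_upwards [eventually_gt_atTop 0] with x hx
  have hsqrt : √(1 + x ^ 2) = x * √((x ^ 2)⁻¹ + 1) := by
    calc √(1 + x ^ 2) = √(x ^ 2 * ((x ^ 2)⁻¹ + 1)) := by congr 1; field_simp
      _ = x * √((x ^ 2)⁻¹ + 1) := by rw [sqrt_mul (sq_nonneg x), sqrt_sq hx.le]
  rw [arsinh, hsqrt, ← mul_one_add, log_mul hx.ne' (by positivity), add_sub_cancel_left]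

theorem tendsto_log_norm_sub_sub_log_norm_cobounded {E : Type*} [SeminormedAddCommGroup E]
    (w : E) : Tendsto (fun u => log ‖u - w‖ - log ‖u‖) (cobounded E) (𝓝 0) := by
  have hnorm : Tendsto (fun u : E => ‖u‖) (cobounded E) atTop := tendsto_norm_cobounded_atTop
  have hratio : Tendsto (fun u : E => ‖u - w‖ / ‖u‖) (cobounded E) (𝓝 1) := by
    rw [← tendsto_sub_nhds_zero_iff]
    refine squeeze_zero_norm' ?_ ((tendsto_const_nhds (x := ‖w‖)).div_atTop hnorm)
    filter_upwards [hnorm.eventually_gt_atTop 0] with u hu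
    rw [div_sub_one hu.ne', norm_div, norm_norm]
    gcongr
    simpa using abs_norm_sub_norm_le (u - w) u
  have := hratio.log one_ne_zero
  rw [log_one] at this
  refine this.congr' ?_
  filter_upwards [hnorm.eventually_gt_atTop ‖w‖] with u hu
  have : 0 < ‖u - w‖ := by linarith [norm_sub_norm_le u w]
  rw [log_div this.ne' (by linarith [norm_nonneg w])]

namespace UpperHalfPlane

theorem comap_norm_coe_atTop :
    comap (fun z : ℍ => ‖(z : ℂ)‖) atTop = comap (↑) (cobounded ℂ) := by
  rw [← comap_norm_atTop, comap_comap]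
  rfl

theorem comap_norm_coe_atTop_le_cobounded :
    comap (fun z : ℍ => ‖(z : ℂ)‖) atTop ≤ cobounded ℍ := by
  rw [comap_norm_coe_atTop, comap_cobounded_le_iff]
  exact fun s hs => (hs.isCompact_closure.image continuous_coe).isBounded.subset
    (Set.image_mono subset_closure)

theorem tendsto_dist_coe_div_sqrt_atTop (z : ℍ) :
    Tendsto (fun w : ℍ => dist (z : ℂ) w / (2 * √(z.im * w.im)))
      (comap (fun w : ℍ => ‖(w : ℂ)‖) atTop) atTop := by
  have hdist := ((Metric.tendsto_dist_left_cobounded_atTop z).mono_left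
    comap_norm_coe_atTop_le_cobounded).atTop_div_const (zero_lt_two' ℝ)
  refine tendsto_atTop_mono (fun w => ?_) hdist
  rw [← sinh_half_dist]
  exact self_le_sinh_iff.2 (by positivity)

theorem log_dist_coe_div_sqrt {z w : ℍ} (hzw : z ≠ w) :
    log (dist (z : ℂ) w / (2 * √(z.im * w.im))) =
      log ‖(w : ℂ) - z‖ - log 2 - (log z.im + log w.im) / 2 := by
  have hne : (w : ℂ) - z ≠ 0 := sub_ne_zero.2 fun h => hzw (UpperHalfPlane.ext h.symm)
  rw [dist_comm, dist_eq_norm, log_div (norm_ne_zero_iff.2 hne) (by positivity),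
    log_mul two_ne_zero (by positivity), log_sqrt (by positivity),
    log_mul z.im_pos.ne' w.im_pos.ne']
  ring

theorem tendsto_dist_sub_two_mul_log_norm_add_log_im (z : ℍ) :
    Tendsto (fun w : ℍ => dist z w - (2 * log ‖(w : ℂ)‖ - log w.im))
      (comap (fun w : ℍ => ‖(w : ℂ)‖) atTop) (𝓝 (-log z.im)) := by
  have harsinh := tendsto_arsinh_sub_log_atTop.comp (tendsto_dist_coe_div_sqrt_atTop z)
  have hlog : Tendsto (fun w : ℍ => log ‖(w : ℂ) - z‖ - log ‖(w : ℂ)‖)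
      (comap (fun w : ℍ => ‖(w : ℂ)‖) atTop) (𝓝 0) := by
    rw [comap_norm_coe_atTop]
    exact (tendsto_log_norm_sub_sub_log_norm_cobounded (z : ℂ)).comp tendsto_comap
  have := ((harsinh.const_mul 2).add (hlog.const_mul 2)).sub_const (2 * log 2 + log z.im)
  rw [show 2 * log 2 + 2 * 0 - (2 * log 2 + log z.im) = -log z.im by ring] at this
  refine this.congr' ?_
  filter_upwards [tendsto_comap.eventually_gt_atTop ‖(z : ℂ)‖] with w hw
  have hzw : z ≠ w := by rintro rfl; exact hw.false
  rw [Function.comp_apply, dist_eq, log_dist_coe_div_sqrt hzw]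
  ring

end UpperHalfPlane

/-- **Horodistance function of the point at infinity in the half-plane model.**  For
`z = x + i y ∈ ℍ`, the quantity `dist z z′ − dist i z′` converges to `−log y` as `z′ → ∞`
in `ℍ` (along the filter of points whose complex modulus tends to `+∞`). -/
theorem UpperHalfPlane.horodistance_infty (z : ℍ) :
    Tendsto (fun z' : ℍ => dist z z' - dist UpperHalfPlane.I z')
      (Filter.comap (fun z' : ℍ => ‖(z' : ℂ)‖) atTop)
      (𝓝 (-Real.log z.im)) := by
  have := (tendsto_dist_sub_two_mul_log_norm_add_log_im z).sub
    (tendsto_dist_sub_two_mul_log_norm_add_log_im I)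
  rw [I_im, log_one, neg_zero, sub_zero] at this
  exact this.congr fun w => by ring
end

section
/- Geodesic polar coordinates in the hyperbolic plane: For every z₀ ∈ ℍ and every measurable function f : [0, ∞) → [0, ∞], ∫_ℍ f(dist(z, z₀)) dμ_ℍ(z) = 2π · ∫₀^∞ f(ρ) · sinh(ρ) dρ, where both sides are Lebesgue integrals with values in [0, ∞]. -/
/-! The hyperbolic closed ball of radius `r` about `z₀` is the Euclidean disc with centre
`z₀.re + i z₀.im cosh r` and radius `z₀.im sinh r`. Integrating the density `1 / y²` over this
disc horizontal slice by horizontal slice gives hyperbolic area `2π (cosh r - 1)`, which is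
`∫₀ʳ 2π sinh ρ dρ`. Hence the push-forward of `μ_ℍ` under `z ↦ dist z z₀` agrees with
`2π sinh ρ dρ` on every half-line `(-∞, r]`, so the two measures coincide, and the theorem is
the change of variables formula for this push-forward. -/

open MeasureTheory Set Real
open scoped UpperHalfPlane ENNReal

noncomputable instance : MeasurableSpace ℍ := borel ℍ
instance : BorelSpace ℍ := ⟨rfl⟩

/-- The hyperbolic area measure on `ℍ`: the measure with density `1 / (Im z)²` with respect
to two-dimensional Lebesgue measure. -/
noncomputable def hypMeasure : Measure ℍ :=
  Measure.comap (fun z : ℍ => (z : ℂ))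
    ((volume : Measure ℂ).withDensity fun z => ENNReal.ofReal (1 / z.im ^ 2))

open Metric

theorem MeasureTheory.Measure.ext_of_Iic' {α : Type*} [TopologicalSpace α] {m : MeasurableSpace α}
    [SecondCountableTopology α] [LinearOrder α] [OrderTopology α] [BorelSpace α] [NoMinOrder α]
    (μ ν : Measure α) (hμ : ∀ a, μ (Iic a) ≠ ∞) (h : ∀ a, μ (Iic a) = ν (Iic a)) : μ = ν := by
  refine μ.ext_of_Ioc' ν
    (fun a b _ => ne_top_of_le_ne_top (hμ b) (measure_mono Ioc_subset_Iic_self)) fun a b hab => ?_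
  have hab' : Iic a ⊆ Iic b := Iic_subset_Iic.2 hab.le
  rw [← Iic_sdiff_Iic, measure_sdiff hab' nullMeasurableSet_Iic (hμ a),
    measure_sdiff hab' nullMeasurableSet_Iic (h a ▸ hμ a), h a, h b]

section PolarCoordinates

variable {X : Type*} [PseudoMetricSpace X] [MeasurableSpace X] [OpensMeasurableSpace X]
  {μ : Measure X} {x₀ : X} {d : ℝ → ℝ≥0∞}

theorem map_dist_eq_withDensity_of_measure_closedBall
    (hfin : ∀ r, 0 ≤ r → μ (closedBall x₀ r) ≠ ∞)
    (h : ∀ r, 0 ≤ r → μ (closedBall x₀ r) = ∫⁻ ρ in Ioc 0 r, d ρ) :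
    μ.map (dist · x₀) = (volume.restrict (Ioi 0)).withDensity d := by
  have hIic (r : ℝ) : μ.map (dist · x₀) (Iic r) = μ (closedBall x₀ r) :=
    Measure.map_apply (continuous_id.dist continuous_const).measurable measurableSet_Iic
  refine Measure.ext_of_Iic' _ _ (fun r => ?_) fun r => ?_
  · rcases lt_or_ge r 0 with hr | hr
    · simp [hIic, closedBall_eq_empty.2 hr]
    · exact hIic r ▸ hfin r hr
  · rw [hIic, withDensity_apply _ measurableSet_Iic, Measure.restrict_restrict measurableSet_Iic,
      Iic_inter_Ioi]
    rcases lt_or_ge r 0 with hr | hr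
    · simp [closedBall_eq_empty.2 hr, Ioc_eq_empty_of_le hr.le]
    · exact h r hr

theorem lintegral_comp_dist_eq_of_measure_closedBall (hd : Measurable d)
    (hfin : ∀ r, 0 ≤ r → μ (closedBall x₀ r) ≠ ∞)
    (h : ∀ r, 0 ≤ r → μ (closedBall x₀ r) = ∫⁻ ρ in Ioc 0 r, d ρ)
    {f : ℝ → ℝ≥0∞} (hf : Measurable f) :
    ∫⁻ x, f (dist x x₀) ∂μ = ∫⁻ ρ in Ioi 0, d ρ * f ρ := by
  rw [← lintegral_map hf (by fun_prop : Measurable (dist · x₀)),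
    map_dist_eq_withDensity_of_measure_closedBall hfin h,
    lintegral_withDensity_eq_lintegral_mul _ hd hf]
  rfl

end PolarCoordinates

theorem Complex.volume_setOf_mk_mem_closedBall (w : ℂ) {R : ℝ} (hR : 0 ≤ R) (y : ℝ) :
    volume {x : ℝ | (⟨x, y⟩ : ℂ) ∈ closedBall w R} =
      ENNReal.ofReal (2 * √(R ^ 2 - (y - w.im) ^ 2)) := by
  set t := R ^ 2 - (y - w.im) ^ 2
  have hmem (x : ℝ) : (⟨x, y⟩ : ℂ) ∈ closedBall w R ↔ (x - w.re) ^ 2 ≤ t := by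
    rw [mem_closedBall, Complex.dist_eq_re_im, Real.sqrt_le_left hR]
    exact le_sub_iff_add_le.symm
  rcases lt_or_ge t 0 with ht | ht
  · have hempty : {x : ℝ | (⟨x, y⟩ : ℂ) ∈ closedBall w R} = ∅ :=
      eq_empty_of_forall_notMem fun x hx => ((hmem x).1 hx).not_gt (ht.trans_le (sq_nonneg _))
    rw [hempty, measure_empty, Real.sqrt_eq_zero_of_nonpos ht.le, mul_zero, ENNReal.ofReal_zero]
  · have hball : {x : ℝ | (⟨x, y⟩ : ℂ) ∈ closedBall w R} = closedBall w.re √t := by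
      ext x
      rw [mem_ofPred_eq, hmem, mem_closedBall, Real.dist_eq, Real.le_sqrt (abs_nonneg _) ht, sq_abs]
    rw [hball, Real.volume_closedBall]

theorem Complex.withDensity_comp_im_closedBall (w : ℂ) {R : ℝ} (hR : 0 ≤ R) {g : ℝ → ℝ≥0∞}
    (hg : Measurable g) :
    (volume.withDensity fun z : ℂ => g z.im) (closedBall w R) =
      ∫⁻ y, ENNReal.ofReal (2 * √(R ^ 2 - (y - w.im) ^ 2)) * g y := by
  have hF : Measurable ((closedBall w R).indicator fun z : ℂ => g z.im) :=
    (hg.comp Complex.measurable_im).indicator measurableSet_closedBall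
  have hslice (y : ℝ) : Measurable fun x : ℝ => (⟨x, y⟩ : ℂ) :=
    Complex.measurableEquivRealProd.symm.measurable.comp (measurable_id.prodMk measurable_const)
  rw [withDensity_apply _ measurableSet_closedBall, ← lintegral_indicator measurableSet_closedBall,
    ← Complex.volume_preserving_equiv_real_prod.symm.lintegral_comp hF, Measure.volume_eq_prod,
    lintegral_prod_symm _ ?_]
  · refine lintegral_congr fun y => ?_
    simp only [Complex.measurableEquivRealProd_symm_apply]
    rw [← Complex.volume_setOf_mk_mem_closedBall w hR y, mul_comm]
    exact lintegral_indicator_const (measurableSet_closedBall.preimage (hslice y)) (g y)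
  · exact (hF.comp Complex.measurableEquivRealProd.symm.measurable).aemeasurable

section ChordIntegral

variable {c R y : ℝ}

theorem hasDerivAt_arcsin_chord (hR : 0 < R) (hRc : R < c) (hy : y ∈ Ioo (c - R) (c + R)) :
    HasDerivAt (fun y => arcsin ((R ^ 2 + c * (y - c)) / (R * y)))
      (√(c ^ 2 - R ^ 2) / (y * √(R ^ 2 - (y - c) ^ 2))) y := by
  obtain ⟨hy₁, hy₂⟩ := hy
  have hy0 : 0 < y := by linarith
  have hS : 0 < R ^ 2 - (y - c) ^ 2 := by nlinarith
  have hD : 0 < c ^ 2 - R ^ 2 := by nlinarith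
  set u := (R ^ 2 + c * (y - c)) / (R * y)
  have hu : 1 - u ^ 2 = (R ^ 2 - (y - c) ^ 2) * (c ^ 2 - R ^ 2) / (R * y) ^ 2 := by
    simp only [u]; field_simp; ring
  have hu_lt : |u| < 1 := by
    rw [← sq_lt_one_iff_abs_lt_one]
    linarith [show 0 < 1 - u ^ 2 by rw [hu]; positivity]
  have hu' : HasDerivAt (fun y => (R ^ 2 + c * (y - c)) / (R * y))
      ((c ^ 2 - R ^ 2) / (R * y ^ 2)) y := by
    refine ((((hasDerivAt_id' y).sub_const c).const_mul c).const_add (R ^ 2)).div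
      ((hasDerivAt_id' y).const_mul R) (by positivity) |>.congr_deriv ?_
    field_simp
    ring
  refine (Real.hasDerivAt_arcsin (abs_lt.1 hu_lt).1.ne' (abs_lt.1 hu_lt).2.ne).comp y hu'
    |>.congr_deriv ?_
  rw [hu, Real.sqrt_div' _ (sq_nonneg _), Real.sqrt_mul hS.le, Real.sqrt_sq (by positivity)]
  field_simp
  rw [Real.sq_sqrt hD.le]

theorem hasDerivAt_sqrt_sub_sq_div_sq_antideriv (hR : 0 < R) (hRc : R < c)
    (hy : y ∈ Ioo (c - R) (c + R)) :
    HasDerivAt (fun y => -(√(R ^ 2 - (y - c) ^ 2) / y) - arcsin ((y - c) / R) +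
        c / √(c ^ 2 - R ^ 2) * arcsin ((R ^ 2 + c * (y - c)) / (R * y)))
      (√(R ^ 2 - (y - c) ^ 2) / y ^ 2) y := by
  obtain ⟨hy₁, hy₂⟩ := hy
  have hy0 : 0 < y := by linarith
  have hS : 0 < R ^ 2 - (y - c) ^ 2 := by nlinarith
  have hD : 0 < c ^ 2 - R ^ 2 := by nlinarith
  have hsqrt : HasDerivAt (fun y => √(R ^ 2 - (y - c) ^ 2))
      (-(y - c) / √(R ^ 2 - (y - c) ^ 2)) y := by
    have hpoly : HasDerivAt (fun y => R ^ 2 - (y - c) ^ 2) (-(2 * (y - c))) y :=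
      (((hasDerivAt_id' y).sub_const c).pow 2).const_sub (R ^ 2) |>.congr_deriv (by ring)
    refine (hpoly.sqrt hS.ne').congr_deriv ?_
    field_simp
  have harcsin : HasDerivAt (fun y => arcsin ((y - c) / R)) (1 / √(R ^ 2 - (y - c) ^ 2)) y := by
    have hlt : |(y - c) / R| < 1 := by
      rw [abs_div, abs_of_pos hR, div_lt_one hR, abs_lt]; constructor <;> linarith
    refine (Real.hasDerivAt_arcsin (abs_lt.1 hlt).1.ne' (abs_lt.1 hlt).2.ne).comp y
      (((hasDerivAt_id' y).sub_const c).div_const R) |>.congr_deriv ?_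
    rw [show 1 - ((y - c) / R) ^ 2 = (R ^ 2 - (y - c) ^ 2) / R ^ 2 by field_simp,
      Real.sqrt_div' _ (sq_nonneg _), Real.sqrt_sq hR.le]
    field_simp
  refine ((hsqrt.div (hasDerivAt_id' y) hy0.ne').neg.sub harcsin).add
    ((hasDerivAt_arcsin_chord hR hRc ⟨hy₁, hy₂⟩).const_mul (c / √(c ^ 2 - R ^ 2))) |>.congr_deriv ?_
  field_simp
  ring

theorem integral_sqrt_sub_sq_div_sq (hR : 0 < R) (hRc : R < c) :
    ∫ y in (c - R)..(c + R), √(R ^ 2 - (y - c) ^ 2) / y ^ 2 = π * (c / √(c ^ 2 - R ^ 2) - 1) := by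
  have hpos : ∀ y ∈ Icc (c - R) (c + R), y ≠ 0 := fun y hy => by linarith [hy.1]
  rw [intervalIntegral.integral_eq_sub_of_hasDerivAt_of_le (by linarith) ?_
    (fun y hy => hasDerivAt_sqrt_sub_sq_div_sq_antideriv hR hRc hy) ?_]
  · have h₁ : (R ^ 2 + c * (c + R - c)) / (R * (c + R)) = 1 := by
      rw [div_eq_iff (mul_ne_zero hR.ne' (by linarith))]; ring
    have h₂ : (R ^ 2 + c * (c - R - c)) / (R * (c - R)) = -1 := by
      rw [div_eq_iff (mul_ne_zero hR.ne' (by linarith))]; ring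
    rw [h₁, h₂]
    simp only [add_sub_cancel_left, sub_self, sqrt_zero, zero_div, neg_zero, ne_eq, hR.ne',
      not_false_eq_true, div_self, arcsin_one, zero_sub, sub_sub_cancel_left, even_two,
      Even.neg_pow, neg_div_self, arcsin_neg, sub_neg_eq_add, zero_add, mul_neg]
    ring
  · refine ContinuousOn.add (ContinuousOn.sub ?_ (by fun_prop)) (continuousOn_const.mul ?_)
    · exact ((by fun_prop : Continuous fun y => √(R ^ 2 - (y - c) ^ 2)).continuousOn.div
        continuousOn_id hpos).neg
    · exact continuous_arcsin.comp_continuousOn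
        ((by fun_prop : Continuous _).continuousOn.div (by fun_prop)
          fun y hy => mul_ne_zero hR.ne' (hpos y hy))
  · refine ContinuousOn.intervalIntegrable ?_
    rw [uIcc_of_le (by linarith)]
    exact (by fun_prop : Continuous _).continuousOn.div (by fun_prop)
      fun y hy => pow_ne_zero 2 (hpos y hy)

theorem lintegral_chord_mul_inv_sq (hR : 0 < R) (hRc : R < c) :
    ∫⁻ y, ENNReal.ofReal (2 * √(R ^ 2 - (y - c) ^ 2)) * ENNReal.ofReal (1 / y ^ 2) =
      ENNReal.ofReal (2 * π * (c / √(c ^ 2 - R ^ 2) - 1)) := by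
  set F := fun y : ℝ => 2 * (√(R ^ 2 - (y - c) ^ 2) / y ^ 2)
  have hF (y : ℝ) : ENNReal.ofReal (2 * √(R ^ 2 - (y - c) ^ 2)) * ENNReal.ofReal (1 / y ^ 2) =
      ENNReal.ofReal (F y) := by
    rw [← ENNReal.ofReal_mul (by positivity), mul_one_div, mul_div_assoc]
  have hsupp : Function.support (fun y => ENNReal.ofReal (F y)) ⊆ Icc (c - R) (c + R) := by
    intro y hy
    by_contra hy'
    have hchord : R ^ 2 - (y - c) ^ 2 ≤ 0 := by
      rcases not_and_or.1 hy' with h | h <;> nlinarith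
    simp [F, Real.sqrt_eq_zero_of_nonpos hchord] at hy
  have hcont : ContinuousOn F (Icc (c - R) (c + R)) :=
    continuousOn_const.mul <| (by fun_prop : Continuous _).continuousOn.div (by fun_prop)
      fun y hy => pow_ne_zero 2 (by linarith [hy.1])
  simp_rw [hF]
  rw [← setLIntegral_eq_of_support_subset hsupp,
    ← ofReal_integral_eq_lintegral_ofReal hcont.integrableOn_Icc
      (ae_of_all _ fun y => by positivity),
    integral_Icc_eq_integral_Ioc, ← intervalIntegral.integral_of_le (by linarith),
    intervalIntegral.integral_const_mul, integral_sqrt_sub_sq_div_sq hR hRc, mul_assoc]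

end ChordIntegral

theorem lintegral_Ioc_ofReal_sinh {r : ℝ} (hr : 0 ≤ r) :
    ∫⁻ ρ in Ioc 0 r, ENNReal.ofReal (sinh ρ) = ENNReal.ofReal (cosh r - 1) := by
  rw [← ofReal_integral_eq_lintegral_ofReal continuous_sinh.integrableOn_Ioc, ←
    intervalIntegral.integral_of_le hr, intervalIntegral.integral_eq_sub_of_hasDerivAt
      (fun x _ => hasDerivAt_cosh x) (continuous_sinh.intervalIntegrable _ _), cosh_zero]
  filter_upwards [ae_restrict_mem measurableSet_Ioc] with ρ hρ
  exact sinh_nonneg_iff.2 hρ.1.le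

theorem hypMeasure_apply (s : Set ℍ) :
    hypMeasure s = (volume.withDensity fun z : ℂ => ENNReal.ofReal (1 / z.im ^ 2)) ((↑) '' s) :=
  UpperHalfPlane.isOpenEmbedding_coe.measurableEmbedding.comap_apply _ _

theorem hypMeasure_closedBall (z₀ : ℍ) {r : ℝ} (hr : 0 ≤ r) :
    hypMeasure (closedBall z₀ r) = ENNReal.ofReal (2 * π * (cosh r - 1)) := by
  rcases hr.eq_or_lt with rfl | hr
  · rw [closedBall_zero, hypMeasure_apply, image_singleton,
      withDensity_absolutelyContinuous _ _ (measure_singleton _)]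
    simp
  have him : √((z₀.im * cosh r) ^ 2 - (z₀.im * sinh r) ^ 2) = z₀.im := by
    rw [show (z₀.im * cosh r) ^ 2 - (z₀.im * sinh r) ^ 2 = z₀.im ^ 2 by
      linear_combination z₀.im ^ 2 * cosh_sq_sub_sinh_sq r, Real.sqrt_sq z₀.im_pos.le]
  rw [hypMeasure_apply, UpperHalfPlane.image_coe_closedBall,
    Complex.withDensity_comp_im_closedBall (g := fun y => ENNReal.ofReal (1 / y ^ 2)) _
      (by positivity) (by fun_prop), UpperHalfPlane.coe_im, UpperHalfPlane.center_im,
    lintegral_chord_mul_inv_sq (by positivity) (by nlinarith [sinh_lt_cosh r, z₀.im_pos]), him,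
    mul_div_cancel_left₀ _ z₀.im_pos.ne']

/-- **Geodesic polar coordinates in the hyperbolic plane.**  For every `z₀ ∈ ℍ` and every
measurable `f : [0, ∞) → [0, ∞]`,
`∫_ℍ f (dist z z₀) dμ_ℍ = 2π · ∫₀^∞ f ρ · sinh ρ dρ`. -/
theorem hypMeasure_lintegral_polar (z₀ : ℍ) (f : ℝ → ℝ≥0∞) (hf : Measurable f) :
    ∫⁻ z, f (dist z z₀) ∂hypMeasure =
      ENNReal.ofReal (2 * π) * ∫⁻ ρ in Ioi (0 : ℝ), f ρ * ENNReal.ofReal (Real.sinh ρ) := by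
  have hball (r : ℝ) (hr : 0 ≤ r) : hypMeasure (closedBall z₀ r) =
      ∫⁻ ρ in Ioc 0 r, ENNReal.ofReal (2 * π) * ENNReal.ofReal (sinh ρ) := by
    rw [hypMeasure_closedBall z₀ hr, lintegral_const_mul _ (by fun_prop),
      lintegral_Ioc_ofReal_sinh hr, ← ENNReal.ofReal_mul (by positivity)]
  have hfin (r : ℝ) (hr : 0 ≤ r) : hypMeasure (closedBall z₀ r) ≠ ∞ := by
    rw [hypMeasure_closedBall z₀ hr]
    exact ENNReal.ofReal_ne_top
  rw [lintegral_comp_dist_eq_of_measure_closedBall (by fun_prop) hfin hball hf,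
    ← lintegral_const_mul' _ _ ENNReal.ofReal_ne_top]
  congr with ρ
  ring
end

section
/- Lower bound for the volume of upper half-balls: For every z₀ ∈ ℍ there exists ρ₀ > 0 such that for all ρ ≥ ρ₀, μ_ℍ( B⁺(z₀, ρ) ) ≥ e^{ρ/3}, where B⁺(z₀, ρ) = {z ∈ ℍ : dist(z, z₀) < ρ and Im z > Im z₀} is the part of the open hyperbolic ball of center z₀ and radius ρ lying strictly above the horizontal line through z₀. -/
open MeasureTheory Real
open scoped UpperHalfPlane

/-!
The half-ball `B⁺(z₀, ρ)` contains the Euclidean rectangle `|x - x₀| < a`, `y₀ < y < 2 y₀`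
with `a = y₀ (2 sinh (ρ / 2) - 1)`, on which the density `1 / y²` is at least `1 / (2 y₀)²`.
Its hyperbolic area is therefore at least `2 a y₀ / (2 y₀)² = sinh (ρ / 2) - 1 / 2`, which
exceeds `e^{ρ / 3}` once `ρ ≥ 12`.
-/

open Set

theorem Complex.volume_reProdIm (s t : Set ℝ) : volume (s ×ℂ t) = volume s * volume t := by
  rw [show s ×ℂ t = Complex.measurableEquivRealProd ⁻¹' s ×ˢ t from rfl,
    Complex.volume_preserving_equiv_real_prod.measure_preimage_equiv, Measure.volume_eq_prod,
    Measure.prod_prod]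

namespace UpperHalfPlane

theorem dist_lt_iff_lt_sinh {z w : ℍ} {r : ℝ} :
    dist z w < r ↔ dist (z : ℂ) w / (2 * √(z.im * w.im)) < sinh (r / 2) := by
  rw [← div_lt_div_iff_of_pos_right (zero_lt_two' ℝ), ← sinh_lt_sinh, sinh_half_dist]

theorem dist_lt_of_abs_re_sub_add_abs_im_sub_lt {z w : ℍ} {r : ℝ} (hzw : w.im ≤ z.im)
    (h : |z.re - w.re| + |z.im - w.im| < 2 * w.im * sinh (r / 2)) : dist z w < r := by
  have hw : w.im ≤ √(z.im * w.im) := le_sqrt_of_sq_le (by nlinarith [w.im_pos])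
  have hsinh : 0 < sinh (r / 2) :=
    pos_of_mul_pos_right (h.trans_le' (by positivity)) (by positivity)
  rw [dist_lt_iff_lt_sinh, div_lt_iff₀ (by positivity)]
  calc dist (z : ℂ) w ≤ |z.re - w.re| + |z.im - w.im| := by
        simpa [Complex.dist_eq] using Complex.norm_le_abs_re_add_abs_im ((z : ℂ) - w)
    _ < 2 * w.im * sinh (r / 2) := h
    _ ≤ sinh (r / 2) * (2 * √(z.im * w.im)) := by nlinarith

end UpperHalfPlane

theorem ofReal_inv_sq_mul_volume_le_hypMeasure_preimage {T : Set ℂ} {c : ℝ}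
    (hT : ∀ w ∈ T, 0 < w.im ∧ w.im ≤ c) :
    ENNReal.ofReal (1 / c ^ 2) * volume T ≤ hypMeasure ((↑) ⁻¹' T) := by
  have himage : ((↑) : ℍ → ℂ) '' ((↑) ⁻¹' T) = T :=
    image_preimage_eq_of_subset fun w hw => ⟨⟨w, (hT w hw).1⟩, rfl⟩
  rw [hypMeasure, UpperHalfPlane.isOpenEmbedding_coe.measurableEmbedding.comap_apply, himage,
    withDensity_apply', ← setLIntegral_const]
  refine setLIntegral_mono (by fun_prop) fun w hw => ENNReal.ofReal_le_ofReal ?_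
  obtain ⟨him_pos, him_le⟩ := hT w hw
  gcongr

theorem exp_div_three_le_sinh_half_sub_half {ρ : ℝ} (hρ : 12 ≤ ρ) :
    exp (ρ / 3) ≤ sinh (ρ / 2) - 1 / 2 := by
  have hsplit : exp (ρ / 2) = exp (ρ / 3) * exp (ρ / 6) := by rw [← exp_add]; ring_nf
  have h₃ := add_one_le_exp (ρ / 3)
  have h₆ := add_one_le_exp (ρ / 6)
  have hneg : exp (-(ρ / 2)) ≤ 1 := exp_le_one_iff.mpr (by linarith)
  rw [sinh_eq]
  nlinarith

def upperHalfBall (z₀ : ℍ) (ρ : ℝ) : Set ℍ := {z | dist z z₀ < ρ ∧ z₀.im < z.im}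

theorem preimage_reProdIm_subset_upperHalfBall (z₀ : ℍ) {a ρ : ℝ}
    (ha : a + z₀.im ≤ 2 * z₀.im * sinh (ρ / 2)) :
    (↑) ⁻¹' (Ioo (z₀.re - a) (z₀.re + a) ×ℂ Ioo z₀.im (2 * z₀.im)) ⊆ upperHalfBall z₀ ρ := by
  rintro z ⟨⟨hre₁, hre₂⟩, him₁, him₂⟩
  simp only [UpperHalfPlane.coe_re, UpperHalfPlane.coe_im] at hre₁ hre₂ him₁ him₂
  refine ⟨UpperHalfPlane.dist_lt_of_abs_re_sub_add_abs_im_sub_lt him₁.le ?_, him₁⟩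
  have hre : |z.re - z₀.re| < a :=
    abs_sub_lt_iff.mpr ⟨by linarith, by linarith⟩
  rw [abs_of_pos (sub_pos.mpr him₁)]
  linarith

/-- **Lower bound for the volume of upper half-balls.**  For every `z₀ ∈ ℍ` there is `ρ₀ > 0`
such that for all `ρ ≥ ρ₀`, `μ_ℍ (B⁺(z₀, ρ)) ≥ e^{ρ/3}`, where `B⁺(z₀, ρ)` is the part of
the open hyperbolic ball of center `z₀` and radius `ρ` lying strictly above the horizontal
line through `z₀`. -/
theorem hypMeasure_upper_half_ball_ge (z₀ : ℍ) :
    ∃ ρ₀ > (0 : ℝ), ∀ ρ ≥ ρ₀,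
      ENNReal.ofReal (Real.exp (ρ / 3)) ≤
        hypMeasure {z : ℍ | dist z z₀ < ρ ∧ z₀.im < z.im} := by
  refine ⟨12, by norm_num, fun ρ hρ => ?_⟩
  set y₀ := z₀.im
  set a := y₀ * (2 * sinh (ρ / 2) - 1)
  set T := Ioo (z₀.re - a) (z₀.re + a) ×ℂ Ioo y₀ (2 * y₀)
  have hy₀ : 0 < y₀ := z₀.im_pos
  have hvol : volume T = ENNReal.ofReal (2 * a) * ENNReal.ofReal y₀ := by
    rw [Complex.volume_reProdIm, Real.volume_Ioo, Real.volume_Ioo]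
    congr 2 <;> ring
  have harea : 1 / (2 * y₀) ^ 2 * (2 * a * y₀) = sinh (ρ / 2) - 1 / 2 := by
    field_simp
    ring
  calc ENNReal.ofReal (exp (ρ / 3))
      ≤ ENNReal.ofReal (1 / (2 * y₀) ^ 2 * (2 * a * y₀)) := by
        rw [harea]
        exact ENNReal.ofReal_le_ofReal (exp_div_three_le_sinh_half_sub_half hρ)
    _ = ENNReal.ofReal (1 / (2 * y₀) ^ 2) * volume T := by
        rw [hvol, ENNReal.ofReal_mul (by positivity), ENNReal.ofReal_mul' hy₀.le]
    _ ≤ hypMeasure ((↑) ⁻¹' T) :=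
        ofReal_inv_sq_mul_volume_le_hypMeasure_preimage fun w ⟨_, hw₁, hw₂⟩ =>
          ⟨hy₀.trans hw₁, hw₂.le⟩
    _ ≤ hypMeasure (upperHalfBall z₀ ρ) :=
        measure_mono (preimage_reProdIm_subset_upperHalfBall z₀ (by linarith))
end
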